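/- Suppose x ∈ ℝᵐ is supported on T∪Δ, y = Ax + w, Δ̃ ⊆ Δ, and Q_{T,λ}(Δ̃) is invertible. Let c(Δ̃) be the regularized least-squares estimate supported on T∪Δ̃. Then ‖c(Δ̃) − x‖₂ ≤ λ f₂(Δ̃)‖x_T − μ̂_T‖₂ + f₃(Δ̃)‖w‖₂ + f₄(Δ̃)‖x_{Δ∖Δ̃}‖₂, where f₂(Δ̃) = ‖Q_{T,λ}(Δ̃)^{-1}‖₂, f₃(Δ̃) = ‖Q_{T,λ}(Δ̃)^{-1}A_{T∪Δ̃}'‖₂, and f₄(Δ̃) = sqrt(‖Q_{T,λ}(Δ̃)^{-1}A_{T∪Δ̃}'A_{Δ∖Δ̃}‖₂² + 1). -/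

import Mathlib

/-! On `T ∪ Δ̃` the normal equations `Q c = A' y + λ μ̂_T`, with
`y = A_{T∪Δ̃} x_{T∪Δ̃} + A_{Δ∖Δ̃} x_{Δ∖Δ̃} + w`, give
`(c − x)_{T∪Δ̃} = Q⁻¹ (λ (μ̂ − x)_T) + Q⁻¹ A' w + Q⁻¹ A' A_{Δ∖Δ̃} x_{Δ∖Δ̃}`,
while off `T ∪ Δ̃` the error is `−x_{Δ∖Δ̃}`. Each piece is bounded by an operator norm; the last
one has support disjoint from `x_{Δ∖Δ̃}`, so Pythagoras produces the square root in `f₄`. -/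

open Matrix BigOperators Finset

noncomputable section

abbrev Idx {m : ℕ} (T : Finset (Fin m)) := {j : Fin m // j ∈ T}

/-- Submatrix of `A` consisting of the columns indexed by `T`. -/
def colsub {n m : ℕ} (A : Matrix (Fin n) (Fin m) ℝ) (T : Finset (Fin m)) :
    Matrix (Fin n) (Idx T) ℝ := Matrix.of fun i j => A i j.1

/-- Euclidean (ℓ2) norm of a finitely indexed vector. -/
def l2 {α : Type*} [Fintype α] (v : α → ℝ) : ℝ := Real.sqrt (∑ i, v i ^ 2)

/-- ℓ1 norm. -/
def l1 {α : Type*} [Fintype α] (v : α → ℝ) : ℝ := ∑ i, |v i|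

/-- ℓ∞ (sup) norm. -/
def linf {α : Type*} [Fintype α] (v : α → ℝ) : ℝ := ⨆ i, |v i|

/-- Spectral (ℓ2 operator) norm of a matrix. -/
def spec {α β : Type*} [Fintype α] [Fintype β] [DecidableEq β] (M : Matrix α β ℝ) : ℝ :=
  ‖LinearMap.toContinuousLinearMap (Matrix.toEuclideanLin M)‖

/-- `Q_{T,λ}(S) = A_{T∪S}' A_{T∪S} + λ·diag(I_T, 0_S)`. -/
def Qmat {n m : ℕ} (A : Matrix (Fin n) (Fin m) ℝ) (T S : Finset (Fin m)) (lam : ℝ) :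
    Matrix (Idx (T ∪ S)) (Idx (T ∪ S)) ℝ :=
  (colsub A (T ∪ S))ᵀ * colsub A (T ∪ S) +
    lam • (Matrix.of (fun i j => if i = j ∧ (i : Fin m) ∈ T then (1 : ℝ) else 0) :
      Matrix (Idx (T ∪ S)) (Idx (T ∪ S)) ℝ)

/-- `M_{T,λ} = I − A_T (A_T'A_T + λ I_T)⁻¹ A_T'`. -/
def Mmat {n m : ℕ} (A : Matrix (Fin n) (Fin m) ℝ) (T : Finset (Fin m)) (lam : ℝ) :
    Matrix (Fin n) (Fin n) ℝ :=
  1 - colsub A T * ((colsub A T)ᵀ * colsub A T + lam • 1)⁻¹ * (colsub A T)ᵀ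

/-- `P_{T,λ}(Δ) = (A_Δ' M A_Δ)⁻¹`. -/
def Pmat {n m : ℕ} (A : Matrix (Fin n) (Fin m) ℝ) (T Δ : Finset (Fin m)) (lam : ℝ) :
    Matrix (Idx Δ) (Idx Δ) ℝ :=
  ((colsub A Δ)ᵀ * Mmat A T lam * colsub A Δ)⁻¹

/-- The regularized least-squares estimate supported on `T ∪ S`:
`c_{T∪S} = Q⁻¹ (A_{T∪S}' y + [λμ̂_T ; 0_S])`, zero outside `T ∪ S`. -/
def cvec {n m : ℕ} (A : Matrix (Fin n) (Fin m) ℝ) (T S : Finset (Fin m)) (lam : ℝ)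
    (y : Fin n → ℝ) (μ : Fin m → ℝ) : Fin m → ℝ :=
  fun i => if h : i ∈ T ∪ S then
    (Qmat A T S lam)⁻¹.mulVec
      (fun j => (∑ k, A k j.1 * y k) + (if (j : Fin m) ∈ T then lam * μ j.1 else 0)) ⟨i, h⟩
  else 0

/-- The reg-mod-BPDN objective
`L(b) = γ‖b_{T^c}‖₁ + (1/2)‖y − Ab‖₂² + (λ/2)‖b_T − μ̂_T‖₂²`. -/
def Lobj {n m : ℕ} (A : Matrix (Fin n) (Fin m) ℝ) (T : Finset (Fin m)) (γ lam : ℝ)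
    (y : Fin n → ℝ) (μ : Fin m → ℝ) (b : Fin m → ℝ) : ℝ :=
  γ * (∑ i ∈ Tᶜ, |b i|) + (1/2) * (∑ i, (y i - A.mulVec b i) ^ 2) +
    (lam/2) * (∑ i ∈ T, (b i - μ i) ^ 2)

/-- The quadratic part `L₁(b) = (1/2)‖y − Ab‖₂² + (λ/2)‖b_T − μ̂_T‖₂²`. -/
def L1obj {n m : ℕ} (A : Matrix (Fin n) (Fin m) ℝ) (T : Finset (Fin m)) (lam : ℝ)
    (y : Fin n → ℝ) (μ : Fin m → ℝ) (b : Fin m → ℝ) : ℝ :=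
  (1/2) * (∑ i, (y i - A.mulVec b i) ^ 2) + (lam/2) * (∑ i ∈ T, (b i - μ i) ^ 2)

/-- `ERC_{T,λ}(Δ) = 1 − max_{ω∉T∪Δ} ‖P(Δ) A_Δ' M A_ω‖₁`. -/
def ERC {n m : ℕ} (A : Matrix (Fin n) (Fin m) ℝ) (T Δ : Finset (Fin m)) (lam : ℝ) : ℝ :=
  1 - ⨆ ω : Idx ((T ∪ Δ)ᶜ),
    l1 ((Pmat A T Δ lam * (colsub A Δ)ᵀ * Mmat A T lam).mulVec (fun i => A i ω.1))

/-- `f₁(Δ)`. -/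
def f1 {n m : ℕ} (A : Matrix (Fin n) (Fin m) ℝ) (T Δ : Finset (Fin m)) (lam : ℝ) : ℝ :=
  Real.sqrt
    (spec (((colsub A T)ᵀ * colsub A T + lam • 1)⁻¹ * (colsub A T)ᵀ * colsub A Δ *
        Pmat A T Δ lam) ^ 2 + spec (Pmat A T Δ lam) ^ 2)

/-- `f₂(Δ) = ‖Q⁻¹‖₂`. -/
def f2 {n m : ℕ} (A : Matrix (Fin n) (Fin m) ℝ) (T Δ : Finset (Fin m)) (lam : ℝ) : ℝ :=
  spec ((Qmat A T Δ lam)⁻¹)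

/-- `f₃(Δ) = ‖Q⁻¹ A_{T∪Δ}'‖₂`. -/
def f3 {n m : ℕ} (A : Matrix (Fin n) (Fin m) ℝ) (T Δ : Finset (Fin m)) (lam : ℝ) : ℝ :=
  spec ((Qmat A T Δ lam)⁻¹ * (colsub A (T ∪ Δ))ᵀ)

/-- `f₄(Δ̃) = sqrt(‖Q(Δ̃)⁻¹ A_{T∪Δ̃}' A_{Δ∖Δ̃}‖₂² + 1)`. -/
def f4 {n m : ℕ} (A : Matrix (Fin n) (Fin m) ℝ) (T Δ Δt : Finset (Fin m)) (lam : ℝ) : ℝ :=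
  Real.sqrt
    (spec ((Qmat A T Δt lam)⁻¹ * (colsub A (T ∪ Δt))ᵀ * colsub A (Δ \ Δt)) ^ 2 + 1)

/-- Numerator of `γ*`: `‖A_{(T∪Δ)^c}'(y − A c(Δ))‖_∞`. -/
def gammaNum {n m : ℕ} (A : Matrix (Fin n) (Fin m) ℝ) (T Δ : Finset (Fin m)) (lam : ℝ)
    (y : Fin n → ℝ) (μ : Fin m → ℝ) : ℝ :=
  linf (fun j : Idx ((T ∪ Δ)ᶜ) =>
    ∑ i, A i j.1 * (y i - A.mulVec (cvec A T Δ lam y μ) i))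

/-- `γ*_{T,λ}(Δ)`. -/
def gammaStar {n m : ℕ} (A : Matrix (Fin n) (Fin m) ℝ) (T Δ : Finset (Fin m)) (lam : ℝ)
    (y : Fin n → ℝ) (μ : Fin m → ℝ) : ℝ :=
  gammaNum A T Δ lam y μ / ERC A T Δ lam

section L2

variable {α : Type*} [Fintype α]

theorem l2_eq_norm (v : α → ℝ) : l2 v = ‖WithLp.toLp 2 v‖ := by
  simp [l2, EuclideanSpace.norm_eq, sq_abs]

theorem l2_nonneg (v : α → ℝ) : 0 ≤ l2 v := Real.sqrt_nonneg _

theorem l2_add_le (u v : α → ℝ) : l2 (u + v) ≤ l2 u + l2 v := by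
  simpa only [l2_eq_norm, WithLp.toLp_add] using norm_add_le (WithLp.toLp 2 u) (WithLp.toLp 2 v)

theorem l2_sub_comm (u v : α → ℝ) : l2 (u - v) = l2 (v - u) := by
  simpa only [l2_eq_norm, WithLp.toLp_sub] using norm_sub_rev (WithLp.toLp 2 u) (WithLp.toLp 2 v)

theorem l2_smul (c : ℝ) (v : α → ℝ) : l2 (c • v) = |c| * l2 v := by
  simp only [l2_eq_norm, WithLp.toLp_smul, norm_smul, Real.norm_eq_abs]

theorem l2_mulVec_le {β : Type*} [Fintype β] [DecidableEq β] (M : Matrix α β ℝ) (v : β → ℝ) :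
    l2 (M *ᵥ v) ≤ spec M * l2 v := by
  simpa [spec, l2_eq_norm] using
    (LinearMap.toContinuousLinearMap (Matrix.toEuclideanLin M)).le_opNorm (WithLp.toLp 2 v)

end L2

section ZeroExtension

variable {α : Type*} [DecidableEq α]

def zeroExt (S : Finset α) (f : {i // i ∈ S} → ℝ) : α → ℝ :=
  fun i => if h : i ∈ S then f ⟨i, h⟩ else 0

theorem zeroExt_add (S : Finset α) (f g : {i // i ∈ S} → ℝ) :
    zeroExt S (f + g) = zeroExt S f + zeroExt S g := by
  ext i
  by_cases h : i ∈ S <;> simp [zeroExt, h]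

theorem zeroExt_sub (S : Finset α) (f g : {i // i ∈ S} → ℝ) :
    zeroExt S (f - g) = zeroExt S f - zeroExt S g := by
  ext i
  by_cases h : i ∈ S <;> simp [zeroExt, h]

theorem sum_zeroExt_sq [Fintype α] (S : Finset α) (f : {i // i ∈ S} → ℝ) :
    ∑ i, zeroExt S f i ^ 2 = ∑ i, f i ^ 2 := by
  rw [← Finset.sum_subset S.subset_univ fun i _ hi => by simp [zeroExt, hi],
    ← Finset.sum_attach, Finset.univ_eq_attach]
  exact Finset.sum_congr rfl fun i _ => by simp [zeroExt, i.2]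

theorem l2_zeroExt [Fintype α] (S : Finset α) (f : {i // i ∈ S} → ℝ) :
    l2 (zeroExt S f) = l2 f := by
  rw [l2, l2, sum_zeroExt_sq]

theorem l2_zeroExt_sub_zeroExt_sq [Fintype α] {S R : Finset α} (hSR : Disjoint S R)
    (f : {i // i ∈ S} → ℝ) (g : {i // i ∈ R} → ℝ) :
    l2 (zeroExt S f - zeroExt R g) ^ 2 = l2 f ^ 2 + l2 g ^ 2 := by
  have hsum : ∀ i, (zeroExt S f - zeroExt R g) i ^ 2 = zeroExt S f i ^ 2 + zeroExt R g i ^ 2 := by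
    intro i
    by_cases hS : i ∈ S
    · simp [zeroExt, hS, Finset.disjoint_left.mp hSR hS]
    · by_cases hR : i ∈ R <;> simp [zeroExt, hS, hR]
  simp only [l2, Real.sq_sqrt (Finset.sum_nonneg fun i _ => sq_nonneg _)]
  rw [Finset.sum_congr rfl fun i _ => hsum i, Finset.sum_add_distrib, sum_zeroExt_sq,
    sum_zeroExt_sq]

theorem l2_zeroExt_mulVec_sub_zeroExt_le [Fintype α] {S R : Finset α} (hSR : Disjoint S R)
    (M : Matrix {i // i ∈ S} {i // i ∈ R} ℝ) (g : {i // i ∈ R} → ℝ) :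
    l2 (zeroExt S (M *ᵥ g) - zeroExt R g) ≤ Real.sqrt (spec M ^ 2 + 1) * l2 g := by
  have hM := l2_mulVec_le M g
  have hsq : l2 (zeroExt S (M *ᵥ g) - zeroExt R g) ^ 2 ≤ (spec M ^ 2 + 1) * l2 g ^ 2 := by
    rw [l2_zeroExt_sub_zeroExt_sq hSR]
    nlinarith [l2_nonneg (M *ᵥ g)]
  rw [← Real.sqrt_sq (l2_nonneg (zeroExt S (M *ᵥ g) - zeroExt R g)),
    ← Real.sqrt_sq (l2_nonneg g), ← Real.sqrt_mul (by positivity)]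
  exact Real.sqrt_le_sqrt hsq

theorem eq_zeroExt_add_zeroExt_of_support {S R : Finset α} (hSR : Disjoint S R) (x : α → ℝ)
    (hx : ∀ i ∉ S ∪ R, x i = 0) :
    x = zeroExt S (fun i => x i) + zeroExt R (fun i => x i) := by
  ext i
  by_cases hS : i ∈ S
  · simp [zeroExt, hS, Finset.disjoint_left.mp hSR hS]
  · by_cases hR : i ∈ R
    · simp [zeroExt, hS, hR]
    · simp [zeroExt, hS, hR, hx i (by simp [hS, hR])]

/-- `maskIn T f = diag(I_T, 0) f`, the regularized block of `Qmat`. -/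
def maskIn (T : Finset α) {S : Finset α} (f : {i // i ∈ S} → ℝ) : {i // i ∈ S} → ℝ :=
  fun i => if (i : α) ∈ T then f i else 0

theorem maskIn_sub (T : Finset α) {S : Finset α} (f g : {i // i ∈ S} → ℝ) :
    maskIn T (f - g) = maskIn T f - maskIn T g := by
  ext i
  by_cases h : (i : α) ∈ T <;> simp [maskIn, h]

theorem maskIn_smul (T : Finset α) {S : Finset α} (c : ℝ) (f : {i // i ∈ S} → ℝ) :
    maskIn T (c • f) = c • maskIn T f := by
  ext i
  by_cases h : (i : α) ∈ T <;> simp [maskIn, h]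

theorem l2_maskIn {T S : Finset α} (hTS : T ⊆ S) (v : α → ℝ) :
    l2 (maskIn T fun i : {i // i ∈ S} => v i) = l2 fun i : {i // i ∈ T} => v i := by
  simp only [l2, maskIn]
  rw [Finset.univ_eq_attach, Finset.univ_eq_attach,
    Finset.sum_attach S fun i => (if i ∈ T then v i else 0) ^ 2,
    Finset.sum_attach T fun i => v i ^ 2,
    ← Finset.sum_subset hTS fun i _ hi => by simp [hi]]
  exact congrArg Real.sqrt (Finset.sum_congr rfl fun i hi => by simp [hi])

end ZeroExtension

section ColumnSubmatrix

variable {n m : ℕ} (A : Matrix (Fin n) (Fin m) ℝ)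

theorem mulVec_zeroExt (S : Finset (Fin m)) (f : Idx S → ℝ) :
    A *ᵥ zeroExt S f = colsub A S *ᵥ f := by
  ext k
  simp only [mulVec, dotProduct, colsub, of_apply, zeroExt]
  rw [← Finset.sum_subset S.subset_univ fun i _ hi => by simp [hi], ← Finset.sum_attach,
    Finset.univ_eq_attach]
  exact Finset.sum_congr rfl fun i _ => by simp [i.2]

theorem Qmat_mulVec (T S : Finset (Fin m)) (lam : ℝ) (v : Idx (T ∪ S) → ℝ) :
    Qmat A T S lam *ᵥ v =
      (colsub A (T ∪ S))ᵀ *ᵥ (colsub A (T ∪ S) *ᵥ v) + lam • maskIn T v := by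
  ext j
  simp only [Qmat, add_mulVec, mulVec_mulVec, smul_mulVec, Pi.add_apply, Pi.smul_apply]
  congr 2
  simp only [mulVec, dotProduct, of_apply, maskIn]
  rw [Finset.sum_eq_single j (fun k _ hk => by simp [Ne.symm hk]) (by simp)]
  by_cases h : (j : Fin m) ∈ T <;> simp [h]

theorem cvec_eq_zeroExt (T S : Finset (Fin m)) (lam : ℝ) (y : Fin n → ℝ) (μ : Fin m → ℝ) :
    cvec A T S lam y μ = zeroExt (T ∪ S)
      ((Qmat A T S lam)⁻¹ *ᵥ
        ((colsub A (T ∪ S))ᵀ *ᵥ y + maskIn T (lam • fun j : Idx (T ∪ S) => μ j))) :=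
  rfl

theorem Qmat_inv_mulVec_sub_eq (T S R : Finset (Fin m)) (lam : ℝ) (hQ : IsUnit (Qmat A T S lam))
    (x₁ μ₁ : Idx (T ∪ S) → ℝ) (x₂ : Idx R → ℝ) (w : Fin n → ℝ) :
    (Qmat A T S lam)⁻¹ *ᵥ ((colsub A (T ∪ S))ᵀ *ᵥ
        (colsub A (T ∪ S) *ᵥ x₁ + colsub A R *ᵥ x₂ + w) + maskIn T (lam • μ₁)) - x₁ =
      (Qmat A T S lam)⁻¹ *ᵥ (lam • maskIn T (μ₁ - x₁)) +
        ((Qmat A T S lam)⁻¹ * (colsub A (T ∪ S))ᵀ) *ᵥ w +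
        ((Qmat A T S lam)⁻¹ * (colsub A (T ∪ S))ᵀ * colsub A R) *ᵥ x₂ := by
  set Q := Qmat A T S lam
  set AS := colsub A (T ∪ S)
  have hQinv : Q⁻¹ * Q = 1 := nonsing_inv_mul Q ((isUnit_iff_isUnit_det Q).mp hQ)
  have hnormal : ASᵀ *ᵥ (AS *ᵥ x₁ + colsub A R *ᵥ x₂ + w) + maskIn T (lam • μ₁) =
      Q *ᵥ x₁ + lam • maskIn T (μ₁ - x₁) + ASᵀ *ᵥ w + (ASᵀ * colsub A R) *ᵥ x₂ := by
    rw [Qmat_mulVec, maskIn_sub, maskIn_smul, smul_sub, mulVec_add, mulVec_add, mulVec_mulVec,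
      mulVec_mulVec]
    abel
  rw [hnormal, mulVec_add, mulVec_add, mulVec_add, mulVec_mulVec, hQinv, one_mulVec,
    mulVec_mulVec, mulVec_mulVec, Matrix.mul_assoc]
  abel

theorem cvec_sub_eq (T S R : Finset (Fin m)) (lam : ℝ)
    (hQ : IsUnit (Qmat A T S lam)) {x : Fin m → ℝ} {x₁ : Idx (T ∪ S) → ℝ} {x₂ : Idx R → ℝ}
    {w y : Fin n → ℝ} (μ : Fin m → ℝ) (hx : x = zeroExt (T ∪ S) x₁ + zeroExt R x₂)
    (hy : y = A *ᵥ x + w) :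
    cvec A T S lam y μ - x =
      zeroExt (T ∪ S)
          ((Qmat A T S lam)⁻¹ *ᵥ (lam • maskIn T ((fun i : Idx (T ∪ S) => μ i) - x₁))) +
        zeroExt (T ∪ S) (((Qmat A T S lam)⁻¹ * (colsub A (T ∪ S))ᵀ) *ᵥ w) +
        (zeroExt (T ∪ S) (((Qmat A T S lam)⁻¹ * (colsub A (T ∪ S))ᵀ * colsub A R) *ᵥ x₂) -
          zeroExt R x₂) := by
  rw [hy, cvec_eq_zeroExt, hx, mulVec_add A, mulVec_zeroExt, mulVec_zeroExt, ← sub_sub,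
    ← zeroExt_sub, Qmat_inv_mulVec_sub_eq A T S R lam hQ, zeroExt_add, zeroExt_add,
    add_sub_assoc]

theorem l2_Qmat_inv_mulVec_smul_maskIn_le (T S : Finset (Fin m)) {lam : ℝ} (hlam : 0 ≤ lam)
    (x μ : Fin m → ℝ) :
    l2 ((Qmat A T S lam)⁻¹ *ᵥ (lam • maskIn T (fun i : Idx (T ∪ S) => μ i - x i))) ≤
      lam * f2 A T S lam * l2 (fun j : Idx T => x j - μ j) := by
  have hmask : l2 (maskIn T (fun i : Idx (T ∪ S) => μ i - x i)) =
      l2 (fun j : Idx T => x j - μ j) :=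
    (l2_maskIn Finset.subset_union_left (μ - x)).trans (l2_sub_comm _ _)
  refine (l2_mulVec_le _ _).trans_eq ?_
  rw [l2_smul, abs_of_nonneg hlam, hmask, f2]
  ring

end ColumnSubmatrix

/-- For `Δ̃ ⊆ Δ`,
`‖c(Δ̃) − x‖₂ ≤ λf₂(Δ̃)‖x_T − μ̂_T‖₂ + f₃(Δ̃)‖w‖₂ + f₄(Δ̃)‖x_{Δ∖Δ̃}‖₂`. -/
theorem stmt7 {n m : ℕ} (A : Matrix (Fin n) (Fin m) ℝ) (T Δ Δt : Finset (Fin m))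
    (hTΔ : Disjoint T Δ) (hsub : Δt ⊆ Δ) (lam : ℝ) (hlam : 0 ≤ lam)
    (x : Fin m → ℝ) (w y : Fin n → ℝ) (μ : Fin m → ℝ)
    (hx : ∀ i ∉ T ∪ Δ, x i = 0)
    (hy : y = fun i => A.mulVec x i + w i)
    (hQ : IsUnit (Qmat A T Δt lam)) :
    l2 (fun i => cvec A T Δt lam y μ i - x i) ≤
      lam * f2 A T Δt lam * l2 (fun j : Idx T => x j.1 - μ j.1) +
        f3 A T Δt lam * l2 w +
        f4 A T Δ Δt lam * l2 (fun j : Idx (Δ \ Δt) => x j.1) := by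
  set S := T ∪ Δt
  set R := Δ \ Δt
  have hSR : Disjoint S R :=
    Finset.disjoint_union_left.mpr ⟨hTΔ.mono_right Finset.sdiff_subset, Finset.disjoint_sdiff⟩
  have hx_split : x = zeroExt S (fun i => x i) + zeroExt R (fun i => x i) :=
    eq_zeroExt_add_zeroExt_of_support hSR x
      (by rwa [Finset.union_assoc, Finset.union_sdiff_of_subset hsub])
  change l2 (cvec A T Δt lam y μ - x) ≤ _
  rw [cvec_sub_eq A T Δt R lam hQ μ hx_split hy]
  refine (l2_add_le _ _).trans (add_le_add ((l2_add_le _ _).trans (add_le_add ?_ ?_)) ?_)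
  · exact (l2_zeroExt S _).trans_le (l2_Qmat_inv_mulVec_smul_maskIn_le A T Δt hlam x μ)
  · exact (l2_zeroExt S _).trans_le (l2_mulVec_le _ _)
  · exact l2_zeroExt_mulVec_sub_zeroExt_le hSR _ _
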